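/- Consider the action of T^3 on S^3 × S^3 × S^3 given by (z₁,z₂,z₃)·((u₁,v₁),(u₂,v₂),(u₃,v₃)) = ((z₁u₁, z₁z₂z̄₃v₁), (z₂z̄₃u₂, z̄₁z₂v₂), (z̄₁z₂z₃u₃, z₃v₃)). A point has nontrivial stabilizer if and only if either (v₂ = v₃ = 0) or (u₁ = u₂ = 0); in the first case the stabilizer is {(1,1,1), (1,-1,-1)} ≅ ℤ/2, and in the second case it is {(1,1,1), (-1,-1,1)} ≅ ℤ/2. -/

import Mathlib

/-!
A unit `z = (a, b, c)` fixes a point iff every character of the action that is paired with a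
nonzero coordinate equals `1`. On a product of spheres each factor has a nonzero coordinate, so
each of the three pairs of characters `(a, abc̄)`, `(bc̄, āb)`, `(ābc, c)` contains a trivial one.
Solving these eight small systems leaves only `(1,1,1)`, `(1,-1,-1)` and `(-1,-1,1)`, and the two
nontrivial elements fix exactly the points with `v₂ = v₃ = 0`, respectively `u₁ = u₂ = 0`.
-/

/-- The action (1) of Example 3: `(z₁,z₂,z₃)` sends
`((u₁,v₁),(u₂,v₂),(u₃,v₃))` to
`((z₁u₁, z₁z₂z̄₃v₁), (z₂z̄₃u₂, z̄₁z₂v₂), (z̄₁z₂z₃u₃, z₃v₃))`.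
`FixesEx3 z u v` says that the torus element `z` fixes the point `(u,v)`. -/
def FixesEx3 (z u v : Fin 3 → ℂ) : Prop :=
  z 0 * u 0 = u 0 ∧ z 0 * z 1 * star (z 2) * v 0 = v 0 ∧
  z 1 * star (z 2) * u 1 = u 1 ∧ star (z 0) * z 1 * v 1 = v 1 ∧
  star (z 0) * z 1 * z 2 * u 2 = u 2 ∧ z 2 * v 2 = v 2

lemma ne_zero_or_ne_zero_of_norm_sq_add_norm_sq_eq_one {E : Type*} [NormedAddCommGroup E]
    {x y : E} (h : ‖x‖ ^ 2 + ‖y‖ ^ 2 = 1) : x ≠ 0 ∨ y ≠ 0 := by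
  by_contra! hxy
  simp [hxy.1, hxy.2] at h

lemma eq_one_or_eq_one_of_mul_eq_self {M₀ : Type*} [MulZeroOneClass M₀] [IsRightCancelMulZero M₀]
    {w w' x y : M₀} (hxy : x ≠ 0 ∨ y ≠ 0) (hx : w * x = x) (hy : w' * y = y) :
    w = 1 ∨ w' = 1 :=
  hxy.imp (fun hx0 => (mul_eq_right₀ hx0).mp hx) (fun hy0 => (mul_eq_right₀ hy0).mp hy)

lemma eq_of_character_conditions {K : Type*} [Field K] {a b c : K} (hb : b ≠ 0)
    (h₁ : a = 1 ∨ a * b = c) (h₂ : b = c ∨ a = b) (h₃ : a = b * c ∨ c = 1) :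
    (a = 1 ∧ b = 1 ∧ c = 1) ∨ (a = 1 ∧ b = -1 ∧ c = -1) ∨ (a = -1 ∧ b = -1 ∧ c = 1) := by
  rcases h₁ with h₁ | h₁ <;> rcases h₂ with h₂ | h₂ <;> rcases h₃ with h₃ | h₃ <;> grind

section

variable {z u v : Fin 3 → ℂ}

lemma character_conditions_of_fixesEx3 (hz : ∀ i, ‖z i‖ = 1)
    (huv : ∀ i, u i ≠ 0 ∨ v i ≠ 0) (h : FixesEx3 z u v) :
    (z 0 = 1 ∨ z 0 * z 1 = z 2) ∧ (z 1 = z 2 ∨ z 0 = z 1) ∧ (z 0 = z 1 * z 2 ∨ z 2 = 1) := by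
  obtain ⟨h₁, h₂, h₃, h₄, h₅, h₆⟩ := h
  have hz₀ : ∀ i, z i ≠ 0 := fun i => norm_ne_zero_iff.mp (by simp [hz i])
  have hstar : ∀ i, star (z i) = (z i)⁻¹ := fun i => (Complex.inv_eq_conj (hz i)).symm
  simp only [hstar] at h₂ h₃ h₄ h₅
  refine ⟨?_, ?_, ?_⟩
  · simpa [mul_inv_eq_one₀ (hz₀ 2)] using
      eq_one_or_eq_one_of_mul_eq_self (huv 0) h₁ h₂
  · simpa [mul_inv_eq_one₀ (hz₀ 2), inv_mul_eq_one₀ (hz₀ 0)] using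
      eq_one_or_eq_one_of_mul_eq_self (huv 1) h₃ h₄
  · simpa [mul_assoc, inv_mul_eq_one₀ (hz₀ 0)] using eq_one_or_eq_one_of_mul_eq_self (huv 2) h₅ h₆

lemma fixesEx3_one : FixesEx3 (fun _ => 1) u v := by
  simp [FixesEx3]

lemma fixesEx3_one_neg_one_neg_one_iff : FixesEx3 ![1, -1, -1] u v ↔ v 1 = 0 ∧ v 2 = 0 := by
  simp [FixesEx3, neg_eq_self]

lemma fixesEx3_neg_one_neg_one_one_iff : FixesEx3 ![-1, -1, 1] u v ↔ u 0 = 0 ∧ u 1 = 0 := by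
  simp [FixesEx3, neg_eq_self]

lemma norm_eq_one_and_fixesEx3_iff (huv : ∀ i, u i ≠ 0 ∨ v i ≠ 0) :
    ((∀ i, ‖z i‖ = 1) ∧ FixesEx3 z u v) ↔ z = (fun _ => 1) ∨
      (z = ![1, -1, -1] ∧ v 1 = 0 ∧ v 2 = 0) ∨ (z = ![-1, -1, 1] ∧ u 0 = 0 ∧ u 1 = 0) := by
  constructor
  · rintro ⟨hz, h⟩
    obtain ⟨a, b, c, rfl⟩ : ∃ a b c : ℂ, z = ![a, b, c] :=
      ⟨z 0, z 1, z 2, by ext i; fin_cases i <;> rfl⟩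
    have hb : b ≠ 0 := by rintro rfl; simpa using hz 1
    obtain ⟨h₁, h₂, h₃⟩ := character_conditions_of_fixesEx3 hz huv h
    rcases eq_of_character_conditions hb h₁ h₂ h₃ with
      ⟨rfl, rfl, rfl⟩ | ⟨rfl, rfl, rfl⟩ | ⟨rfl, rfl, rfl⟩
    · left; ext i; fin_cases i <;> rfl
    · exact .inr (.inl ⟨rfl, fixesEx3_one_neg_one_neg_one_iff.mp h⟩)
    · exact .inr (.inr ⟨rfl, fixesEx3_neg_one_neg_one_one_iff.mp h⟩)
  · rintro (rfl | ⟨rfl, hv⟩ | ⟨rfl, hu⟩)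
    · exact ⟨fun i => by simp, fixesEx3_one⟩
    · exact ⟨fun i => by fin_cases i <;> simp, fixesEx3_one_neg_one_neg_one_iff.mpr hv⟩
    · exact ⟨fun i => by fin_cases i <;> simp, fixesEx3_neg_one_neg_one_one_iff.mpr hu⟩

end

/-- Lemma 2: a point of `S³×S³×S³` has nontrivial stabilizer for the action above
iff `v₂ = v₃ = 0` or `u₁ = u₂ = 0`; in the first case the stabilizer is
`{(1,1,1),(1,-1,-1)} ≅ ℤ₂`, in the second `{(1,1,1),(-1,-1,1)} ≅ ℤ₂`. -/
theorem stmt_1 (u v : Fin 3 → ℂ) (hsphere : ∀ i, ‖u i‖ ^ 2 + ‖v i‖ ^ 2 = 1) :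
    ((∃ z : Fin 3 → ℂ, (∀ i, ‖z i‖ = 1) ∧ z ≠ (fun _ => 1) ∧ FixesEx3 z u v) ↔
      ((v 1 = 0 ∧ v 2 = 0) ∨ (u 0 = 0 ∧ u 1 = 0))) ∧
    ((v 1 = 0 ∧ v 2 = 0) →
      {z : Fin 3 → ℂ | (∀ i, ‖z i‖ = 1) ∧ FixesEx3 z u v} =
        {fun _ => 1, ![1, -1, -1]}) ∧
    ((u 0 = 0 ∧ u 1 = 0) →
      {z : Fin 3 → ℂ | (∀ i, ‖z i‖ = 1) ∧ FixesEx3 z u v} =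
        {fun _ => 1, ![-1, -1, 1]}) := by
  have huv i := ne_zero_or_ne_zero_of_norm_sq_add_norm_sq_eq_one (hsphere i)
  have hne₁ : ![(1 : ℂ), -1, -1] ≠ fun _ => 1 := fun h => absurd (congrFun h 1) (by norm_num)
  have hne₂ : ![(-1 : ℂ), -1, 1] ≠ fun _ => 1 := fun h => absurd (congrFun h 1) (by norm_num)
  refine ⟨⟨?_, ?_⟩, ?_, ?_⟩
  · rintro ⟨z, hz, hz₁, h⟩
    rcases (norm_eq_one_and_fixesEx3_iff huv).mp ⟨hz, h⟩ with h₁ | ⟨-, hv⟩ | ⟨-, hu⟩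
    exacts [absurd h₁ hz₁, .inl hv, .inr hu]
  · rintro (hv | hu)
    · obtain ⟨hz, h⟩ := (norm_eq_one_and_fixesEx3_iff huv).mpr (.inr (.inl ⟨rfl, hv⟩))
      exact ⟨_, hz, hne₁, h⟩
    · obtain ⟨hz, h⟩ := (norm_eq_one_and_fixesEx3_iff huv).mpr (.inr (.inr ⟨rfl, hu⟩))
      exact ⟨_, hz, hne₂, h⟩
  · rintro ⟨hv₁, hv₂⟩
    have hu₁ : u 1 ≠ 0 := (huv 1).resolve_right (not_not.mpr hv₁)
    ext z
    simp [norm_eq_one_and_fixesEx3_iff huv, hv₁, hv₂, hu₁]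
  · rintro ⟨hu₀, hu₁⟩
    have hv₁ : v 1 ≠ 0 := (huv 1).resolve_left (not_not.mpr hu₁)
    ext z
    simp [norm_eq_one_and_fixesEx3_iff huv, hu₀, hu₁, hv₁]
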